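/- arXiv:2007.06708 — 2 statements merged into one kernel-verified Lean document; each statement's English description precedes it below -/
import Mathlib

section
/- Let M ∈ ℂ^{n×n} be Hermitian and let Ŷ ∈ OB(r,n) be rank-deficient (rank(Ŷ) < r) and second-order critical for minimizing Y ↦ Re tr(M Y Yᴴ) over OB(r,n), i.e., with S(Ŷ) = M − Re(ddiag(M Ŷ Ŷᴴ)) one has S(Ŷ) Ŷ = 0 and Re tr(Ẏᴴ S(Ŷ) Ẏ) ≥ 0 for every Ẏ ∈ ℂ^{n×r} with Re(ddiag(Ẏ Ŷᴴ)) = 0. Then Ŷ is a global minimizer of Y ↦ Re tr(M Y Yᴴ) over OB(r,n), and X̂ = Ŷ Ŷᴴ is a global minimizer of Re tr(M X) over {X Hermitian : X ⪰ 0, diag(X) = 𝟙}. (Paper's Proposition 2.) -/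
/-!
Rank deficiency gives `z ≠ 0` with `Ŷ z = 0`. Every direction `Ẏ = x zᴴ` is then tangent at `Ŷ`,
and the second-order condition along it reads `‖z‖² · xᴴ S(Ŷ) x ≥ 0`; hence `S(Ŷ) ⪰ 0`.
Since `S(Ŷ)` differs from `M` by a diagonal matrix, `tr(M X) = tr(S(Ŷ) X) + c` for every `X` with
unit diagonal, where `c` does not depend on `X`. Now `tr(S(Ŷ) X) ≥ 0` for `X ⪰ 0`, while
`tr(S(Ŷ) Ŷ Ŷᴴ) = 0` by first-order criticality, so `Ŷ Ŷᴴ` minimizes (SDP) and a fortiori `Ŷ`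
minimizes (r-SDP).
-/

open Matrix Complex
open scoped ComplexOrder

noncomputable section

/-- `SMat M Y = M − Re(ddiag(M Y Yᴴ))`, the certificate matrix `S(Y)` for (r-SDP). -/
def SMat {n r : ℕ} (M : Matrix (Fin n) (Fin n) ℂ) (Y : Matrix (Fin n) (Fin r) ℂ) :
    Matrix (Fin n) (Fin n) ℂ :=
  M - Matrix.diagonal (fun i => (((M * Y * Yᴴ) i i).re : ℂ))

namespace Matrix

theorem exists_mulVec_eq_zero_of_rank_lt {m n K : Type*} [Fintype n] [Field K]
    (A : Matrix m n K) (h : A.rank < Fintype.card n) : ∃ v ≠ 0, A *ᵥ v = 0 := by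
  have hker : LinearMap.ker A.mulVecLin ≠ ⊥ := by
    intro hbot
    have := A.mulVecLin.finrank_range_add_finrank_ker
    rw [hbot, finrank_bot, Module.finrank_fintype_fun_eq_card] at this
    exact h.ne this
  obtain ⟨v, hv, hne⟩ := Submodule.exists_mem_ne_zero_of_ne_bot hker
  exact ⟨v, hne, hv⟩

theorem vecMulVec_star_mul_conjTranspose_eq_zero {m n R : Type*} [Fintype n] [CommRing R]
    [StarRing R] {Y : Matrix m n R} {z : n → R} (hz : Y *ᵥ z = 0) (x : m → R) :
    vecMulVec x (star z) * Yᴴ = 0 := by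
  rw [vecMulVec_mul, ← star_mulVec, hz, star_zero, vecMulVec_zero]

section RCLike

variable {m n 𝕜 : Type*} [Fintype m] [Fintype n] [RCLike 𝕜]

theorem PosSemidef.trace_mul_nonneg {A B : Matrix n n 𝕜} (hA : A.PosSemidef)
    (hB : B.PosSemidef) : 0 ≤ (A * B).trace := by
  classical
  obtain ⟨C, rfl⟩ := by
    open scoped MatrixOrder in exact CStarAlgebra.nonneg_iff_eq_star_mul_self.mp hB.nonneg
  rw [star_eq_conjTranspose, ← Matrix.mul_assoc, trace_mul_comm]
  simpa only [Matrix.mul_assoc] using (hA.mul_mul_conjTranspose_same C).trace_nonneg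

theorem trace_conjTranspose_vecMulVec_mul_mul_vecMulVec (S : Matrix n n 𝕜) (x : n → 𝕜) (z : m → 𝕜) :
    ((vecMulVec x (star z))ᴴ * S * vecMulVec x (star z)).trace
      = (star x ⬝ᵥ S *ᵥ x) * (star z ⬝ᵥ z) := by
  rw [conjTranspose_vecMulVec, star_star, vecMulVec_mul, vecMulVec_mul_vecMulVec,
    trace_vecMulVec, dotProduct_smul, smul_eq_mul, dotProduct_comm z, dotProduct_mulVec]

theorem IsHermitian.posSemidef_of_re_trace_vecMulVec_nonneg {S : Matrix n n 𝕜}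
    (hS : S.IsHermitian) {z : m → 𝕜} (hz : z ≠ 0)
    (h : ∀ x : n → 𝕜,
      0 ≤ RCLike.re ((vecMulVec x (star z))ᴴ * S * vecMulVec x (star z)).trace) :
    S.PosSemidef := by
  refine .of_dotProduct_mulVec_nonneg hS fun x => ?_
  have hz_pos := RCLike.pos_iff.mp (dotProduct_star_self_pos_iff.mpr hz)
  have hx := h x
  rw [trace_conjTranspose_vecMulVec_mul_mul_vecMulVec, RCLike.mul_re, hz_pos.2, mul_zero, sub_zero] at hx
  exact RCLike.nonneg_iff.mpr
    ⟨nonneg_of_mul_nonneg_left hx hz_pos.1, hS.im_star_dotProduct_mulVec_self x⟩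

theorem trace_mul_le_of_dual_certificate [DecidableEq n] {M X₀ X : Matrix n n 𝕜} (d : n → 𝕜)
    (hS : (M - diagonal d).PosSemidef) (hS₀ : (M - diagonal d) * X₀ = 0)
    (hX₀ : ∀ i, X₀ i i = 1) (hX : X.PosSemidef) (hXd : ∀ i, X i i = 1) :
    (M * X₀).trace ≤ (M * X).trace := by
  have hsplit : ∀ Y : Matrix n n 𝕜, (∀ i, Y i i = 1) →
      (M * Y).trace = ((M - diagonal d) * Y).trace + ∑ i, d i := by
    intro Y hY
    simp [sub_mul, trace, diagonal_mul, hY]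
  rw [hsplit X₀ hX₀, hsplit X hXd, hS₀, trace_zero, zero_add]
  exact le_add_of_nonneg_left (hS.trace_mul_nonneg hX)

end RCLike

end Matrix

theorem isHermitian_SMat {n r : ℕ} {M : Matrix (Fin n) (Fin n) ℂ} (hM : M.IsHermitian)
    (Y : Matrix (Fin n) (Fin r) ℂ) : (SMat M Y).IsHermitian :=
  hM.sub (isHermitian_diagonal_of_self_adjoint _ (funext fun _ => conj_ofReal _))

theorem posSemidef_SMat_of_rank_lt {n r : ℕ} {M : Matrix (Fin n) (Fin n) ℂ}
    (hM : M.IsHermitian) {Y : Matrix (Fin n) (Fin r) ℂ} (hrank : Y.rank < r)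
    (hsecond : ∀ Ydot : Matrix (Fin n) (Fin r) ℂ, (∀ i, ((Ydot * Yᴴ) i i).re = 0) →
      0 ≤ ((Ydotᴴ * SMat M Y * Ydot).trace).re) :
    (SMat M Y).PosSemidef := by
  obtain ⟨z, hz, hYz⟩ := Y.exists_mulVec_eq_zero_of_rank_lt (by simpa using hrank)
  refine (isHermitian_SMat hM Y).posSemidef_of_re_trace_vecMulVec_nonneg hz fun x => ?_
  refine hsecond _ fun i => ?_
  rw [vecMulVec_star_mul_conjTranspose_eq_zero hYz x, Matrix.zero_apply, zero_re]

/-- **Paper's Proposition 2.** If `Ŷ ∈ OB(r,n)` is rank-deficient and second-order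
critical for `Y ↦ Re tr(M Y Yᴴ)` over `OB(r,n)` (`M` Hermitian), then `Ŷ` is a global
minimizer over `OB(r,n)` and `X̂ = Ŷ Ŷᴴ` is a global minimizer of (SDP). -/
theorem stmt5 {n r : ℕ} (M : Matrix (Fin n) (Fin n) ℂ) (hM : M.IsHermitian)
    (Yhat : Matrix (Fin n) (Fin r) ℂ)
    (hOB : ∀ i, (Yhat * Yhatᴴ) i i = 1)
    (hrank : Yhat.rank < r)
    (hfirst : SMat M Yhat * Yhat = 0)
    (hsecond : ∀ Ydot : Matrix (Fin n) (Fin r) ℂ,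
      (∀ i, ((Ydot * Yhatᴴ) i i).re = 0) →
      0 ≤ ((Ydotᴴ * SMat M Yhat * Ydot).trace).re) :
    (∀ Y : Matrix (Fin n) (Fin r) ℂ, (∀ i, (Y * Yᴴ) i i = 1) →
      ((M * (Yhat * Yhatᴴ)).trace).re ≤ ((M * (Y * Yᴴ)).trace).re) ∧
    (Yhat * Yhatᴴ).PosSemidef ∧ (∀ i, (Yhat * Yhatᴴ) i i = 1) ∧
    (∀ X : Matrix (Fin n) (Fin n) ℂ, X.PosSemidef → (∀ i, X i i = 1) →
      ((M * (Yhat * Yhatᴴ)).trace).re ≤ ((M * X).trace).re) := by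
  have hS := posSemidef_SMat_of_rank_lt hM hrank hsecond
  have hS₀ : SMat M Yhat * (Yhat * Yhatᴴ) = 0 := by
    rw [← Matrix.mul_assoc, hfirst, Matrix.zero_mul]
  have hmin : ∀ X : Matrix (Fin n) (Fin n) ℂ, X.PosSemidef → (∀ i, X i i = 1) →
      ((M * (Yhat * Yhatᴴ)).trace).re ≤ ((M * X).trace).re := fun X hX hXd =>
    (le_def.mp (trace_mul_le_of_dual_certificate _ hS hS₀ hOB hX hXd)).1
  exact ⟨fun Y hY => hmin _ (posSemidef_self_mul_conjTranspose Y) hY,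
    posSemidef_self_mul_conjTranspose Yhat, hOB, hmin⟩
end
end

section
/- Let M̄, M̃ ∈ ℂ^{n×n} be Hermitian with M̄ z̄ = 0 for some z̄ ∈ ℂ₁ⁿ, and let ẑ ∈ ℂ₁ⁿ be a global minimizer of z ↦ zᴴ M̃ z over ℂ₁ⁿ. Then ẑᴴ M̄ ẑ ≤ 2n ‖M̃ − M̄‖₂. -/
open Matrix Complex
open scoped Matrix.Norms.L2Operator

/-! Write `Δ = M̃ - M̄` and `q_A(z) = Re (zᴴ A z)`. Since `M̄ z̄ = 0` and `ẑ` minimizes `q_M̃`,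
`q_M̄(ẑ) = q_M̃(ẑ) - q_Δ(ẑ) ≤ q_M̃(z̄) - q_Δ(ẑ) = q_Δ(z̄) - q_Δ(ẑ)`, and each term is at most
`‖z‖² ‖Δ‖₂ = n ‖Δ‖₂` in absolute value by Cauchy–Schwarz. -/

section QuadraticForm

variable {𝕜 ι : Type*} [RCLike 𝕜] [Fintype ι]

theorem EuclideanSpace.norm_toLp_sq_of_forall_norm_eq_one {z : ι → 𝕜} (hz : ∀ i, ‖z i‖ = 1) :
    ‖WithLp.toLp 2 z‖ ^ 2 = Fintype.card ι := by
  simp [EuclideanSpace.norm_sq_eq, hz]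

variable [DecidableEq ι]

theorem Matrix.norm_star_dotProduct_mulVec_le (A : Matrix ι ι 𝕜) (z : ι → 𝕜) :
    ‖star z ⬝ᵥ A *ᵥ z‖ ≤ ‖A‖ * ‖WithLp.toLp 2 z‖ ^ 2 :=
  calc ‖star z ⬝ᵥ A *ᵥ z‖
      = ‖inner 𝕜 (WithLp.toLp 2 z) (WithLp.toLp 2 (A *ᵥ z))‖ := by
        rw [EuclideanSpace.inner_toLp_toLp, dotProduct_comm]
    _ ≤ ‖WithLp.toLp 2 z‖ * ‖WithLp.toLp 2 (A *ᵥ z)‖ := norm_inner_le_norm _ _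
    _ ≤ ‖WithLp.toLp 2 z‖ * (‖A‖ * ‖WithLp.toLp 2 z‖) :=
        mul_le_mul_of_nonneg_left (A.l2_opNorm_mulVec (WithLp.toLp 2 z)) (norm_nonneg _)
    _ = ‖A‖ * ‖WithLp.toLp 2 z‖ ^ 2 := by ring

theorem Matrix.norm_star_dotProduct_mulVec_le_card_mul (A : Matrix ι ι 𝕜) {z : ι → 𝕜}
    (hz : ∀ i, ‖z i‖ = 1) : ‖star z ⬝ᵥ A *ᵥ z‖ ≤ Fintype.card ι * ‖A‖ := by
  simpa [EuclideanSpace.norm_toLp_sq_of_forall_norm_eq_one hz, mul_comm] using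
    A.norm_star_dotProduct_mulVec_le z

end QuadraticForm

theorem stmt12_general {n : ℕ} (Mbar Mt : Matrix (Fin n) (Fin n) ℂ)
    (zbar : Fin n → ℂ) (hzbar : ∀ i, ‖zbar i‖ = 1)
    (hker : Mbar.mulVec zbar = 0)
    (zhat : Fin n → ℂ) (hzhat : ∀ i, ‖zhat i‖ = 1)
    (hopt : ∀ z : Fin n → ℂ, (∀ i, ‖z i‖ = 1) →
      (star zhat ⬝ᵥ Mt.mulVec zhat).re ≤ (star z ⬝ᵥ Mt.mulVec z).re) :
    (star zhat ⬝ᵥ Mbar.mulVec zhat).re ≤ 2 * n * ‖Mt - Mbar‖ := by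
  set Δ := Mt - Mbar
  have hbar : star zbar ⬝ᵥ Mt *ᵥ zbar = star zbar ⬝ᵥ Δ *ᵥ zbar := by
    simp [Δ, sub_mulVec, hker]
  have hhat : star zhat ⬝ᵥ Mbar *ᵥ zhat = star zhat ⬝ᵥ Mt *ᵥ zhat - star zhat ⬝ᵥ Δ *ᵥ zhat := by
    simp [Δ, sub_mulVec, dotProduct_sub]
  have hΔbar := Δ.norm_star_dotProduct_mulVec_le_card_mul hzbar
  have hΔhat := Δ.norm_star_dotProduct_mulVec_le_card_mul hzhat
  rw [Fintype.card_fin] at hΔbar hΔhat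
  have hopt_bar := hopt zbar hzbar
  rw [hbar] at hopt_bar
  rw [hhat, sub_re]
  linarith [re_le_norm (star zbar ⬝ᵥ Δ *ᵥ zbar), neg_abs_le (star zhat ⬝ᵥ Δ *ᵥ zhat).re,
    abs_re_le_norm (star zhat ⬝ᵥ Δ *ᵥ zhat)]

/-- If `M̄ z̄ = 0` for some `z̄ ∈ ℂ₁ⁿ` (`M̄, M̃` Hermitian) and `ẑ ∈ ℂ₁ⁿ` is a global
minimizer of `z ↦ zᴴ M̃ z` over `ℂ₁ⁿ`, then `ẑᴴ M̄ ẑ ≤ 2n ‖M̃ − M̄‖₂`. -/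
theorem stmt12 {n : ℕ} (Mbar Mt : Matrix (Fin n) (Fin n) ℂ)
    (hMbar : Mbar.IsHermitian) (hMt : Mt.IsHermitian)
    (zbar : Fin n → ℂ) (hzbar : ∀ i, ‖zbar i‖ = 1)
    (hker : Mbar.mulVec zbar = 0)
    (zhat : Fin n → ℂ) (hzhat : ∀ i, ‖zhat i‖ = 1)
    (hopt : ∀ z : Fin n → ℂ, (∀ i, ‖z i‖ = 1) →
      (star zhat ⬝ᵥ Mt.mulVec zhat).re ≤ (star z ⬝ᵥ Mt.mulVec z).re) :
    (star zhat ⬝ᵥ Mbar.mulVec zhat).re ≤ 2 * n * ‖Mt - Mbar‖ :=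
  stmt12_general Mbar Mt zbar hzbar hker zhat hzhat hopt
end
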